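/- arXiv:1909.08787 — 2 statements merged into one kernel-verified Lean document; each statement's English description precedes it below -/
import Mathlib

section
/- Let S be a nonempty closed subset of a Polish metric space (M, ρ), let π_S be a measurable projection onto S (so ρ(x, π_S(x)) = d(x,S) for all x), and let μ be any probability measure on M with finite second moment whose support is contained in S. Then for any probability measure Q on M with finite second moment, W_2^2(Q, μ) ≥ W_2^2(Q, π_S # Q). -/
/-!
Transporting every point of `Q` to its nearest point `π_S x` is a coupling of `Q` and `π_S # Q`
of cost `∫ d(x,S)² dQ`. Conversely, any coupling of `Q` with a measure carried by `S` moves `x`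
to some point of `S`, hence at cost at least `d(x,S)²`.
-/

open MeasureTheory ENNReal

/-- The set of couplings of two measures: probability measures on the product
with the prescribed marginals. -/
def couplings {α : Type*} [MeasurableSpace α] (μ ν : Measure α) :
    Set (Measure (α × α)) :=
  {π | IsProbabilityMeasure π ∧ π.map Prod.fst = μ ∧ π.map Prod.snd = ν}

/-- Optimal transport cost between two measures for a cost function `c`. -/
noncomputable def Wcost {α : Type*} [MeasurableSpace α] (c : α → α → ℝ≥0∞)
    (μ ν : Measure α) : ℝ≥0∞ :=
  ⨅ π ∈ couplings μ ν, ∫⁻ p, c p.1 p.2 ∂π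

/-- Squared second-order Wasserstein distance. -/
noncomputable def W2sq {α : Type*} [MeasurableSpace α] [PseudoMetricSpace α]
    (μ ν : Measure α) : ℝ≥0∞ :=
  Wcost (fun x y => ENNReal.ofReal (dist x y ^ 2)) μ ν

section Couplings

variable {α : Type*} [MeasurableSpace α]

theorem map_prodMk_mem_couplings (μ : Measure α) [IsProbabilityMeasure μ] {f : α → α}
    (hf : Measurable f) : μ.map (fun x => (x, f x)) ∈ couplings μ (μ.map f) := by
  have hg : Measurable fun x => (x, f x) := measurable_id.prodMk hf
  refine ⟨Measure.isProbabilityMeasure_map hg.aemeasurable, ?_, ?_⟩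
  · rw [Measure.map_map measurable_fst hg]
    exact Measure.map_id
  · rw [Measure.map_map measurable_snd hg]
    rfl

theorem Wcost_map_le_lintegral (c : α → α → ℝ≥0∞) (μ : Measure α) [IsProbabilityMeasure μ]
    {f : α → α} (hf : Measurable f) : Wcost c μ (μ.map f) ≤ ∫⁻ x, c x (f x) ∂μ :=
  calc Wcost c μ (μ.map f) ≤ ∫⁻ p, c p.1 p.2 ∂(μ.map fun x => (x, f x)) :=
        iInf₂_le _ (map_prodMk_mem_couplings μ hf)
    _ ≤ ∫⁻ x, c x (f x) ∂μ := lintegral_map_le (fun p : α × α => c p.1 p.2) _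

theorem ae_snd_mem_of_mem_couplings {μ ν : Measure α} {π : Measure (α × α)}
    (hπ : π ∈ couplings μ ν) {S : Set α} (hνS : ν Sᶜ = 0) : ∀ᵐ p ∂π, p.2 ∈ S := by
  obtain ⟨-, -, hπν⟩ := hπ
  refine ae_of_ae_map measurable_snd.aemeasurable ?_
  rwa [hπν, ae_iff]

theorem lintegral_le_Wcost_of_le_cost {c : α → α → ℝ≥0∞} {g : α → ℝ≥0∞} (hg : Measurable g)
    {S : Set α} (hgc : ∀ x, ∀ y ∈ S, g x ≤ c x y) {μ ν : Measure α}
    (hνS : ν Sᶜ = 0) : ∫⁻ x, g x ∂μ ≤ Wcost c μ ν := by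
  refine le_iInf₂ fun π hπ => ?_
  calc ∫⁻ x, g x ∂μ = ∫⁻ p, g p.1 ∂π := by
        rw [← hπ.2.1, lintegral_map hg measurable_fst]
    _ ≤ ∫⁻ p, c p.1 p.2 ∂π := lintegral_mono_ae <| by
        filter_upwards [ae_snd_mem_of_mem_couplings hπ hνS] with p hp
        exact hgc p.1 p.2 hp

end Couplings

theorem W2sq_ge_W2sq_map_of_support_subset_general {M : Type*} [MetricSpace M]
    [MeasurableSpace M] [BorelSpace M]
    (S : Set M)
    (πS : M → M) (hπmeas : Measurable πS)
    (hπproj : ∀ x, dist x (πS x) = Metric.infDist x S)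
    (μ : Measure M) (hμS : μ Sᶜ = 0)
    (Q : Measure M) [IsProbabilityMeasure Q] :
    W2sq Q μ ≥ W2sq Q (Q.map πS) := by
  have hdist_sq : Measurable fun x => ENNReal.ofReal (Metric.infDist x S ^ 2) :=
    ((Metric.continuous_infDist_pt S).pow 2).measurable.ennreal_ofReal
  calc W2sq Q (Q.map πS) ≤ ∫⁻ x, ENNReal.ofReal (dist x (πS x) ^ 2) ∂Q :=
        Wcost_map_le_lintegral _ Q hπmeas
    _ = ∫⁻ x, ENNReal.ofReal (Metric.infDist x S ^ 2) ∂Q := by simp only [hπproj]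
    _ ≤ W2sq Q μ := lintegral_le_Wcost_of_le_cost hdist_sq
        (fun x y hy => ENNReal.ofReal_le_ofReal <|
          pow_le_pow_left₀ Metric.infDist_nonneg (Metric.infDist_le_dist_of_mem hy) 2) hμS

/-- Lemma B.2: for a measurable metric projection `π_S` onto a nonempty
closed subset `S` of a Polish space, any probability measure `μ` with finite second
moment supported in `S`, and any probability measure `Q` with finite second moment,
`W_2²(Q, μ) ≥ W_2²(Q, π_S # Q)`. -/
theorem W2sq_ge_W2sq_map_of_support_subset {M : Type*} [MetricSpace M]
    [TopologicalSpace.SeparableSpace M] [CompleteSpace M]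
    [MeasurableSpace M] [BorelSpace M]
    (S : Set M) (hSclosed : IsClosed S) (hSne : S.Nonempty)
    (πS : M → M) (hπmeas : Measurable πS) (hπmem : ∀ x, πS x ∈ S)
    (hπproj : ∀ x, dist x (πS x) = Metric.infDist x S)
    (μ : Measure M) [IsProbabilityMeasure μ] (hμS : μ Sᶜ = 0)
    (hμ : ∀ x₀ : M, ∫⁻ x, ENNReal.ofReal (dist x x₀ ^ 2) ∂μ < ⊤)
    (Q : Measure M) [IsProbabilityMeasure Q]
    (hQ : ∀ x₀ : M, ∫⁻ x, ENNReal.ofReal (dist x x₀ ^ 2) ∂Q < ⊤) :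
    W2sq Q μ ≥ W2sq Q (Q.map πS) :=
  W2sq_ge_W2sq_map_of_support_subset_general S πS hπmeas hπproj μ hμS Q
end

section
/- Fix m ≥ 1 and distributions P^1,…,P^m ∈ P_2(Θ) with Θ ⊂ R^d. If for each j the empirical measures satisfy W_2(P^j_{n_j}, P^j) → 0 almost surely as n_j → ∞, then inf f_{n⃗}(G⃗, H) − inf f(G⃗, H) → 0 almost surely as all n_j → ∞, where f_{n⃗}(G⃗,H) = Σ_j W_2^2(G_j, P^j_{n_j}) + λ W_2^2(H, (1/m)Σ_j δ_{G_j}), f is the same with P^j replacing P^j_{n_j}, and the infima are taken over G_j ∈ O_{k_j}(Θ) and H ∈ E_M(P_2(Θ)). -/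
/-!
For fixed `G` and `H` the two objectives differ only in their data terms, and since all
measures live on the bounded set `Θ`, the triangle inequality for `W₂` gives
`W₂²(G, Q) ≤ W₂²(G, P) + 2 diam(Θ) W₂(P, Q) + W₂(P, Q)²`. Taking infima in both directions,
`|inf f_n - inf f| ≤ ∑ⱼ (2 diam(Θ) W₂(Pⱼₙ, Pⱼ) + W₂(Pⱼₙ, Pⱼ)²)`, which tends to `0` almost surely.
The triangle inequality itself comes from gluing two couplings along their common marginal
(by disintegration) and Minkowski's inequality in `L²`.
-/

open MeasureTheory ENNReal

/-- `O_k(Θ)`: probability measures with at most `k` support points, all in `Θ`. -/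
def OkSet {α : Type*} [MeasurableSpace α] (Θ : Set α) (k : ℕ) : Set (Measure α) :=
  {G | IsProbabilityMeasure G ∧
    ∃ s : Finset α, ↑s ⊆ Θ ∧ s.card ≤ k ∧ G ((↑s : Set α))ᶜ = 0}

/-- `E_M(P_2(Θ))`: probability measures on the space of measures, supported on exactly
`M` atoms, each atom being a probability measure supported in `Θ`. -/
def EMSet {α : Type*} [MeasurableSpace α] (Θ : Set α) (M : ℕ) :
    Set (Measure (Measure α)) :=
  {H | IsProbabilityMeasure H ∧
    ∃ (a : Fin M → Measure α) (w : Fin M → ℝ≥0∞),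
      Function.Injective a ∧ (∀ i, w i ≠ 0) ∧
      (∀ i, IsProbabilityMeasure (a i) ∧ (a i) Θᶜ = 0) ∧
      H = ∑ i, w i • Measure.dirac (a i)}

/-- The MWM objective with data measures `P j`: `Σ_j W_2²(G_j, P_j) + λ W_2²(H, (1/m)Σ_j δ_{G_j})`,
infimized over `G_j ∈ O_{k_j}(Θ)` and `H ∈ E_M(P_2(Θ))`. Here the outer `W_2²` uses
ground cost `W2sq`. -/
noncomputable def mwmInf {α : Type*} [MeasurableSpace α] [PseudoMetricSpace α]
    (Θ : Set α) (m : ℕ) (k : Fin m → ℕ) (M : ℕ) (lam : ℝ)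
    (P : Fin m → Measure α) : ℝ≥0∞ :=
  ⨅ G ∈ {G : Fin m → Measure α | ∀ j, G j ∈ OkSet Θ (k j)},
  ⨅ H ∈ EMSet Θ M,
    (∑ j, W2sq (G j) (P j)) +
      ENNReal.ofReal lam *
        Wcost (fun μ ν => W2sq μ ν) H ((m : ℝ≥0∞)⁻¹ • ∑ j, Measure.dirac (G j))


section Wasserstein

variable {X : Type*} [MeasurableSpace X]

lemma swap_mem_couplings {μ ν : Measure X} {π : Measure (X × X)} (hπ : π ∈ couplings μ ν) :
    π.map Prod.swap ∈ couplings ν μ := by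
  obtain ⟨hπ, hfst, hsnd⟩ := hπ
  refine ⟨Measure.isProbabilityMeasure_map measurable_swap.aemeasurable, ?_, ?_⟩
  · rwa [Measure.map_map measurable_fst measurable_swap]
  · rwa [Measure.map_map measurable_snd measurable_swap]

lemma map_snd_mem_couplings {μ ν ρ : Measure X} {π₁ π₂ : Measure (X × X)}
    (h₁ : π₁ ∈ couplings μ ν) (h₂ : π₂ ∈ couplings ν ρ) {η : Measure (X × X × X)}
    (hη₁ : η.map (Prod.map id Prod.fst) = π₁.map Prod.swap)
    (hη₂ : η.map (Prod.map id Prod.snd) = π₂) :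
    η.map Prod.snd ∈ couplings μ ρ := by
  have hmeas₁ : Measurable (Prod.map id Prod.fst : X × X × X → X × X) := by fun_prop
  have hmeas₂ : Measurable (Prod.map id Prod.snd : X × X × X → X × X) := by fun_prop
  have hη : IsProbabilityMeasure η := by
    rw [← Measure.isProbabilityMeasure_map_iff hmeas₂.aemeasurable, hη₂]; exact h₂.1
  refine ⟨Measure.isProbabilityMeasure_map measurable_snd.aemeasurable, ?_, ?_⟩
  · have hswap := Measure.snd_map_swap (ρ := π₁)
    rw [← hη₁, Measure.snd, Measure.fst, Measure.map_map measurable_snd hmeas₁] at hswap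
    rw [Measure.map_map measurable_fst measurable_snd, ← h₁.2.1, ← hswap]
    rfl
  · rw [Measure.map_map measurable_snd measurable_snd, ← h₂.2.2, ← hη₂,
      Measure.map_map measurable_snd hmeas₂]
    rfl

variable [PseudoMetricSpace X]

noncomputable def W2 (μ ν : Measure X) : ℝ≥0∞ := W2sq μ ν ^ (1 / 2 : ℝ)

lemma W2_sq (μ ν : Measure X) : W2 μ ν ^ 2 = W2sq μ ν := by
  rw [W2, ← ENNReal.rpow_natCast, ← ENNReal.rpow_mul]
  norm_num

lemma W2sq_eq_iInf_lintegral_edist (μ ν : Measure X) :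
    W2sq μ ν = ⨅ π ∈ couplings μ ν, ∫⁻ p, edist p.1 p.2 ^ (2 : ℝ) ∂π := by
  refine iInf_congr fun π => iInf_congr fun _ => lintegral_congr fun p => ?_
  change ENNReal.ofReal (dist p.1 p.2 ^ 2) = _
  rw [ENNReal.ofReal_pow dist_nonneg, ← edist_dist, ← ENNReal.rpow_natCast]
  norm_num

lemma W2_eq_iInf (μ ν : Measure X) :
    W2 μ ν = ⨅ π ∈ couplings μ ν, (∫⁻ p, edist p.1 p.2 ^ (2 : ℝ) ∂π) ^ (1 / 2 : ℝ) := by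
  rw [W2, W2sq_eq_iInf_lintegral_edist]
  simp only [← ENNReal.orderIsoRpow_apply (1 / 2) (by norm_num), OrderIso.map_iInf]

lemma W2sq_le_comm [OpensMeasurableSpace X] [SecondCountableTopology X] (μ ν : Measure X) :
    W2sq μ ν ≤ W2sq ν μ := by
  simp only [W2sq_eq_iInf_lintegral_edist]
  refine le_iInf₂ fun π hπ => (iInf₂_le _ (swap_mem_couplings hπ)).trans_eq ?_
  rw [lintegral_map (measurable_edist.pow_const _) measurable_swap]
  simp only [Prod.fst_swap, Prod.snd_swap, edist_comm]

lemma W2_comm [OpensMeasurableSpace X] [SecondCountableTopology X] (μ ν : Measure X) :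
    W2 μ ν = W2 ν μ := by
  rw [W2, W2, (W2sq_le_comm μ ν).antisymm (W2sq_le_comm ν μ)]

lemma W2_le_ofReal_diam {Θ : Set X} (hΘ : Bornology.IsBounded Θ) {μ ν : Measure X}
    [IsProbabilityMeasure μ] [IsProbabilityMeasure ν] (hμ : μ Θᶜ = 0) (hν : ν Θᶜ = 0) :
    W2 μ ν ≤ ENNReal.ofReal (Metric.diam Θ) := by
  have hprod : μ.prod ν ∈ couplings μ ν := ⟨inferInstance, by simp, by simp⟩
  have hfst : ∀ᵐ x ∂(μ.prod ν).map Prod.fst, x ∈ Θ := by rw [hprod.2.1]; exact mem_ae_iff.2 hμ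
  have hsnd : ∀ᵐ y ∂(μ.prod ν).map Prod.snd, y ∈ Θ := by rw [hprod.2.2]; exact mem_ae_iff.2 hν
  have hsupp : ∀ᵐ p ∂μ.prod ν, p.1 ∈ Θ ∧ p.2 ∈ Θ :=
    (ae_of_ae_map measurable_fst.aemeasurable hfst).and
      (ae_of_ae_map measurable_snd.aemeasurable hsnd)
  have hcost : W2sq μ ν ≤ ENNReal.ofReal (Metric.diam Θ) ^ 2 := by
    refine (iInf₂_le _ hprod).trans ?_
    calc ∫⁻ p, ENNReal.ofReal (dist p.1 p.2 ^ 2) ∂μ.prod ν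
        ≤ ∫⁻ _, ENNReal.ofReal (Metric.diam Θ) ^ 2 ∂μ.prod ν := by
          refine lintegral_mono_ae (hsupp.mono fun p hp => ?_)
          rw [← ENNReal.ofReal_pow Metric.diam_nonneg]
          gcongr
          exact Metric.dist_le_diam_of_mem hΘ hp.1 hp.2
      _ = ENNReal.ofReal (Metric.diam Θ) ^ 2 := by simp
  rwa [← W2_sq, ENNReal.pow_le_pow_left_iff two_ne_zero] at hcost

end Wasserstein

section Gluing

open ProbabilityTheory

variable {α β γ : Type*} [MeasurableSpace α] [MeasurableSpace β] [MeasurableSpace γ]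
  [StandardBorelSpace β] [Nonempty β] [StandardBorelSpace γ] [Nonempty γ]

lemma exists_gluing (π₁ : Measure (α × β)) (π₂ : Measure (α × γ)) [IsFiniteMeasure π₁]
    [IsFiniteMeasure π₂] (h : π₁.fst = π₂.fst) :
    ∃ η : Measure (α × β × γ),
      η.map (Prod.map id Prod.fst) = π₁ ∧ η.map (Prod.map id Prod.snd) = π₂ := by
  refine ⟨π₁.fst ⊗ₘ (π₁.condKernel ×ₖ π₂.condKernel), ?_, ?_⟩
  · rw [← Measure.compProd_map measurable_fst, ← Kernel.fst_eq, Kernel.fst_prod,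
      π₁.disintegrate]
  · rw [← Measure.compProd_map measurable_snd, ← Kernel.snd_eq, Kernel.snd_prod, h,
      π₂.disintegrate]

end Gluing

section Triangle

variable {X : Type*} [MeasurableSpace X] [PseudoMetricSpace X] [OpensMeasurableSpace X]
  [SecondCountableTopology X] [StandardBorelSpace X] [Nonempty X]

lemma W2_le_add_of_mem_couplings {μ ν ρ : Measure X} {π₁ π₂ : Measure (X × X)}
    (h₁ : π₁ ∈ couplings μ ν) (h₂ : π₂ ∈ couplings ν ρ) :
    W2 μ ρ ≤ (∫⁻ p, edist p.1 p.2 ^ (2 : ℝ) ∂π₁) ^ (1 / 2 : ℝ) +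
      (∫⁻ p, edist p.1 p.2 ^ (2 : ℝ) ∂π₂) ^ (1 / 2 : ℝ) := by
  have := h₁.1
  have := h₂.1
  have hmid : (π₁.map Prod.swap).fst = π₂.fst := by
    rw [Measure.fst_map_swap]; exact h₁.2.2.trans h₂.2.1.symm
  -- the coordinates of `η` carry the marginals `ν`, `μ`, `ρ`, in this order
  obtain ⟨η, hη₁, hη₂⟩ := exists_gluing (π₁.map Prod.swap) π₂ hmid
  have hf : Measurable fun q : X × X × X => edist q.2.1 q.1 := by fun_prop
  have hg : Measurable fun q : X × X × X => edist q.1 q.2.2 := by fun_prop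
  have hcost₁ : ∫⁻ q, edist q.2.1 q.1 ^ (2 : ℝ) ∂η = ∫⁻ p, edist p.1 p.2 ^ (2 : ℝ) ∂π₁ := by
    have h := lintegral_map (μ := η) (f := fun p : X × X => edist p.2 p.1 ^ (2 : ℝ))
      (by fun_prop) (by fun_prop : Measurable (Prod.map id Prod.fst : X × X × X → X × X))
    rw [hη₁, lintegral_map (by fun_prop) measurable_swap] at h
    exact h.symm
  have hcost₂ : ∫⁻ q, edist q.1 q.2.2 ^ (2 : ℝ) ∂η = ∫⁻ p, edist p.1 p.2 ^ (2 : ℝ) ∂π₂ := by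
    rw [← hη₂, lintegral_map (measurable_edist.pow_const _) (by fun_prop)]
    rfl
  calc W2 μ ρ ≤ (∫⁻ p, edist p.1 p.2 ^ (2 : ℝ) ∂η.map Prod.snd) ^ (1 / 2 : ℝ) := by
        rw [W2_eq_iInf]; exact iInf₂_le _ (map_snd_mem_couplings h₁ h₂ hη₁ hη₂)
    _ ≤ (∫⁻ q, ((fun q : X × X × X => edist q.2.1 q.1) +
          fun q : X × X × X => edist q.1 q.2.2) q ^ (2 : ℝ) ∂η) ^ (1 / 2 : ℝ) := by
        rw [lintegral_map (measurable_edist.pow_const _) measurable_snd]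
        gcongr with q
        exact edist_triangle _ _ _
    _ ≤ _ := by
        rw [← hcost₁, ← hcost₂]
        exact ENNReal.lintegral_Lp_add_le hf.aemeasurable hg.aemeasurable one_le_two

lemma W2_triangle (μ ν ρ : Measure X) : W2 μ ρ ≤ W2 μ ν + W2 ν ρ := by
  rw [W2_eq_iInf μ ν, W2_eq_iInf ν ρ]
  exact ENNReal.le_iInf₂_add_iInf₂ fun π₁ h₁ π₂ h₂ => W2_le_add_of_mem_couplings h₁ h₂

lemma W2sq_le_W2sq_add (μ ν ρ : Measure X) :
    W2sq μ ρ ≤ W2sq μ ν + (2 * W2 μ ν * W2 ν ρ + W2 ν ρ ^ 2) := by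
  rw [← W2_sq μ ρ, ← W2_sq μ ν]
  calc W2 μ ρ ^ 2 ≤ (W2 μ ν + W2 ν ρ) ^ 2 := by gcongr; exact W2_triangle μ ν ρ
    _ = _ := by ring

lemma W2sq_le_W2sq_add_ofReal {Θ : Set X} (hΘ : Bornology.IsBounded Θ) {μ ν ρ : Measure X}
    [IsProbabilityMeasure μ] [IsProbabilityMeasure ν] (hμ : μ Θᶜ = 0) (hν : ν Θᶜ = 0)
    (hνρ : W2 ν ρ ≠ ∞) :
    W2sq μ ρ ≤ W2sq μ ν +
      ENNReal.ofReal (2 * Metric.diam Θ * (W2 ν ρ).toReal + (W2 ν ρ).toReal ^ 2) := by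
  have hdiam := Metric.diam_nonneg (s := Θ)
  refine (W2sq_le_W2sq_add μ ν ρ).trans (add_le_add le_rfl ?_)
  rw [ENNReal.ofReal_add (by positivity) (by positivity), ENNReal.ofReal_mul (by positivity),
    ENNReal.ofReal_mul zero_le_two, ENNReal.ofReal_pow ENNReal.toReal_nonneg,
    ENNReal.ofReal_toReal hνρ, ENNReal.ofReal_ofNat]
  gcongr
  exact W2_le_ofReal_diam hΘ hμ hν

end Triangle

lemma ENNReal.abs_toReal_sub_le {a b : ℝ≥0∞} {e : ℝ} (he : 0 ≤ e)
    (hab : a ≤ b + ENNReal.ofReal e) (hba : b ≤ a + ENNReal.ofReal e) :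
    |a.toReal - b.toReal| ≤ e := by
  have top_of_top {x y : ℝ≥0∞} (hxy : y ≤ x + ENNReal.ofReal e) (hy : y = ∞) : x = ∞ := by
    rw [hy, top_le_iff, ENNReal.add_eq_top] at hxy
    exact hxy.resolve_right ENNReal.ofReal_ne_top
  have h₁ := ENNReal.toReal_le_add' hab (top_of_top hba) fun h => (ENNReal.ofReal_ne_top h).elim
  have h₂ := ENNReal.toReal_le_add' hba (top_of_top hab) fun h => (ENNReal.ofReal_ne_top h).elim
  rw [ENNReal.toReal_ofReal he] at h₁ h₂
  exact abs_sub_le_iff.2 ⟨by linarith, by linarith⟩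

section Objective

variable {X : Type*} [MeasurableSpace X] [PseudoMetricSpace X] [OpensMeasurableSpace X]
  [SecondCountableTopology X] [StandardBorelSpace X] [Nonempty X]
  {Θ : Set X} (m : ℕ) (k : Fin m → ℕ) (M : ℕ) (lam : ℝ) {P Q : Fin m → Measure X}

lemma mwmInf_le_add (hΘ : Bornology.IsBounded Θ)
    (hP : ∀ j, IsProbabilityMeasure (P j) ∧ P j Θᶜ = 0)
    (hQ : ∀ j, IsProbabilityMeasure (Q j) ∧ Q j Θᶜ = 0) :
    mwmInf Θ m k M lam Q ≤ mwmInf Θ m k M lam P + ENNReal.ofReal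
      (∑ j, (2 * Metric.diam Θ * (W2 (P j) (Q j)).toReal + (W2 (P j) (Q j)).toReal ^ 2)) := by
  have hdiam := Metric.diam_nonneg (s := Θ)
  rw [ENNReal.ofReal_sum_of_nonneg fun j _ => by positivity, mwmInf, mwmInf]
  simp only [ENNReal.iInf_add]
  refine iInf₂_mono fun G hG => iInf₂_mono fun H _ => ?_
  rw [add_right_comm, ← Finset.sum_add_distrib]
  gcongr with j
  obtain ⟨hGj, s, hsΘ, -, hs⟩ := hG j
  have := (hP j).1
  have := (hQ j).1
  exact W2sq_le_W2sq_add_ofReal hΘ (measure_mono_null (Set.compl_subset_compl.2 hsΘ) hs) (hP j).2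
    ((W2_le_ofReal_diam hΘ (hP j).2 (hQ j).2).trans_lt ENNReal.ofReal_lt_top).ne

lemma abs_toReal_mwmInf_sub_le (hΘ : Bornology.IsBounded Θ)
    (hP : ∀ j, IsProbabilityMeasure (P j) ∧ P j Θᶜ = 0)
    (hQ : ∀ j, IsProbabilityMeasure (Q j) ∧ Q j Θᶜ = 0) :
    |(mwmInf Θ m k M lam Q).toReal - (mwmInf Θ m k M lam P).toReal| ≤
      ∑ j, (2 * Metric.diam Θ * (W2 (Q j) (P j)).toReal + (W2 (Q j) (P j)).toReal ^ 2) := by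
  have hdiam := Metric.diam_nonneg (s := Θ)
  refine ENNReal.abs_toReal_sub_le (by positivity) ?_ (mwmInf_le_add m k M lam hΘ hQ hP)
  simpa only [W2_comm (P _)] using mwmInf_le_add m k M lam hΘ hP hQ

end Objective

open Filter

theorem mwm_objective_consistency_general {d : ℕ} {Ω : Type*} [MeasurableSpace Ω]
    (Pr : Measure Ω)
    (Θ : Set (EuclideanSpace ℝ (Fin d))) (hΘ : IsCompact Θ)
    (m : ℕ) (k : Fin m → ℕ)
    (M : ℕ) (lam : ℝ)
    (P : Fin m → Measure (EuclideanSpace ℝ (Fin d)))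
    (hP : ∀ j, IsProbabilityMeasure (P j) ∧ (P j) Θᶜ = 0)
    (Pn : Fin m → ℕ → Ω → Measure (EuclideanSpace ℝ (Fin d)))
    (hPn : ∀ j n ω, IsProbabilityMeasure (Pn j n ω) ∧ (Pn j n ω) Θᶜ = 0)
    (hconv : ∀ j, ∀ᵐ ω ∂Pr,
      Tendsto (fun n => ((W2sq (Pn j n ω) (P j)) ^ (1 / 2 : ℝ)).toReal)
        atTop (nhds 0)) :
    ∀ᵐ ω ∂Pr,
      Tendsto
        (fun nv : Fin m → ℕ =>
          (mwmInf Θ m k M lam (fun j => Pn j (nv j) ω)).toReal -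
            (mwmInf Θ m k M lam P).toReal)
        atTop (nhds 0) := by
  filter_upwards [ae_all_iff.2 hconv] with ω hω
  have hW2 : ∀ j, Tendsto (fun nv : Fin m → ℕ => (W2 (Pn j (nv j) ω) (P j)).toReal)
      atTop (nhds 0) := fun j =>
    (hω j).comp (tendsto_atTop_atTop.2 fun n => ⟨fun _ => n, fun _ h => h j⟩)
  have hbound : Tendsto (fun nv : Fin m → ℕ => ∑ j, (2 * Metric.diam Θ *
      (W2 (Pn j (nv j) ω) (P j)).toReal + (W2 (Pn j (nv j) ω) (P j)).toReal ^ 2))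
      atTop (nhds 0) := by
    simpa using tendsto_finsetSum Finset.univ fun j _ =>
      ((hW2 j).const_mul (2 * Metric.diam Θ)).add ((hW2 j).pow 2)
  exact squeeze_zero_norm (fun nv => abs_toReal_mwmInf_sub_le m k M lam hΘ.isBounded hP
    fun j => hPn j (nv j) ω) hbound

/-- Theorem 4(i): if the empirical measures converge to the truths in
`W_2` almost surely, then the optimal value of the empirical MWM objective converges
almost surely to the optimal value of the population objective as all `n_j → ∞`. -/
theorem mwm_objective_consistency {d : ℕ} {Ω : Type*} [MeasurableSpace Ω]
    (Pr : Measure Ω) [IsProbabilityMeasure Pr]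
    (Θ : Set (EuclideanSpace ℝ (Fin d))) (hΘ : IsCompact Θ) (hΘne : Θ.Nonempty)
    (m : ℕ) (hm : 1 ≤ m) (k : Fin m → ℕ) (hk : ∀ j, 1 ≤ k j)
    (M : ℕ) (hM : 1 ≤ M) (lam : ℝ) (hlam : 0 < lam)
    (P : Fin m → Measure (EuclideanSpace ℝ (Fin d)))
    (hP : ∀ j, IsProbabilityMeasure (P j) ∧ (P j) Θᶜ = 0)
    (Pn : Fin m → ℕ → Ω → Measure (EuclideanSpace ℝ (Fin d)))
    (hPn : ∀ j n ω, IsProbabilityMeasure (Pn j n ω) ∧ (Pn j n ω) Θᶜ = 0)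
    (hconv : ∀ j, ∀ᵐ ω ∂Pr,
      Tendsto (fun n => ((W2sq (Pn j n ω) (P j)) ^ (1 / 2 : ℝ)).toReal)
        atTop (nhds 0)) :
    ∀ᵐ ω ∂Pr,
      Tendsto
        (fun nv : Fin m → ℕ =>
          (mwmInf Θ m k M lam (fun j => Pn j (nv j) ω)).toReal -
            (mwmInf Θ m k M lam P).toReal)
        atTop (nhds 0) :=
  mwm_objective_consistency_general Pr Θ hΘ m k M lam P hP Pn hPn hconv
end
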